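/- arXiv:1010.1745 — 5 statements merged into one kernel-verified Lean document; each statement's English description precedes it below -/
import Mathlib

section
/- Let u : ℝⁿ → ℝ ∪ {∞} be convex with u ≥ 0 and u(0) = 0, and for h > 0 define S_h = {x : u(x) < h} and b(h) = h^{-1/2} · sup_{x ∈ S_h} x_n (assuming these suprema are finite and positive). Then for all 0 < h₁ ≤ h₂, (h₁/h₂)^{1/2} ≤ b(h₁)/b(h₂) ≤ (h₂/h₁)^{1/2}. -/
/-!
Writing `M h = sup_{S_h} x_n`, so that `b h₁ / b h₂ = √(h₂ / h₁) · M h₁ / M h₂`, both bounds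
reduce to `(h₁ / h₂) · M h₂ ≤ M h₁ ≤ M h₂`. The right inequality holds because `S_h` grows
with `h`; the left one because convexity and `u 0 = 0` give `u (t • x) ≤ t · u x` for
`t ∈ [0, 1]`, so `(h₁ / h₂) • S_{h₂} ⊆ S_{h₁}`.
-/

open Set

theorem sSup_image_sublevel_mono {α : Type*} {u : α → ℝ} (f : α → ℝ) {h₁ h₂ : ℝ}
    (hle : h₁ ≤ h₂) (hne : {x | u x < h₁}.Nonempty) (hbdd : BddAbove (f '' {x | u x < h₂})) :
    sSup (f '' {x | u x < h₁}) ≤ sSup (f '' {x | u x < h₂}) :=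
  csSup_le_csSup hbdd (hne.image f) (image_mono fun _ hx => lt_of_lt_of_le hx hle)

section Sublevel

variable {E : Type*} [AddCommGroup E] [Module ℝ E] {u : E → ℝ}

theorem ConvexOn.apply_smul_le_mul {s : Set E} (hu : ConvexOn ℝ s u) (h0 : (0 : E) ∈ s)
    (hu0 : u 0 ≤ 0) {x : E} (hx : x ∈ s) {t : ℝ} (ht0 : 0 ≤ t) (ht1 : t ≤ 1) :
    u (t • x) ≤ t * u x := by
  have key := hu.2 hx h0 ht0 (sub_nonneg.2 ht1) (add_sub_cancel t 1)
  rw [smul_zero, add_zero, smul_eq_mul, smul_eq_mul] at key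
  nlinarith

theorem ConvexOn.div_mul_sSup_image_sublevel_le (hu : ConvexOn ℝ univ u) (hu0 : u 0 ≤ 0)
    (f : E →ₗ[ℝ] ℝ) {h₁ h₂ : ℝ} (hh₁ : 0 < h₁) (hle : h₁ ≤ h₂)
    (hbdd : BddAbove (f '' {x | u x < h₁})) :
    h₁ / h₂ * sSup (f '' {x | u x < h₂}) ≤ sSup (f '' {x | u x < h₁}) := by
  have hh₂ : 0 < h₂ := hh₁.trans_le hle
  have ht : 0 < h₁ / h₂ := div_pos hh₁ hh₂
  have hne : {x | u x < h₂}.Nonempty := ⟨0, hu0.trans_lt hh₂⟩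
  rw [mul_comm, ← le_div_iff₀ ht]
  refine csSup_le (hne.image f) ?_
  rintro _ ⟨x, hx, rfl⟩
  have hdil : u ((h₁ / h₂) • x) < h₁ :=
    calc u ((h₁ / h₂) • x) ≤ h₁ / h₂ * u x :=
          hu.apply_smul_le_mul trivial hu0 trivial ht.le ((div_le_one hh₂).2 hle)
      _ < h₁ / h₂ * h₂ := mul_lt_mul_of_pos_left hx ht
      _ = h₁ := div_mul_cancel₀ _ hh₂.ne'
  rw [le_div_iff₀ ht, mul_comm, ← smul_eq_mul, ← f.map_smul]
  exact le_csSup hbdd ⟨_, hdil, rfl⟩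

end Sublevel

theorem rpow_neg_half_mul_div_rpow_neg_half_mul {h₁ h₂ : ℝ} (hh₁ : 0 < h₁) (hh₂ : 0 < h₂)
    (a b : ℝ) :
    h₁ ^ (-(1 : ℝ) / 2) * a / (h₂ ^ (-(1 : ℝ) / 2) * b) = √(h₂ / h₁) * (a / b) := by
  simp only [neg_div, Real.rpow_neg hh₁.le, Real.rpow_neg hh₂.le, ← Real.sqrt_eq_rpow,
    Real.sqrt_div hh₂.le]
  field_simp

theorem Real.sqrt_div_eq_sqrt_div_mul {x y : ℝ} (hx : 0 < x) (hy : 0 < y) :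
    √(x / y) = √(y / x) * (x / y) := by
  have hsx := Real.sqrt_pos.2 hx
  have hsy := Real.sqrt_pos.2 hy
  rw [Real.sqrt_div hx.le, Real.sqrt_div hy.le]
  field_simp
  rw [Real.sq_sqrt hx.le, Real.sq_sqrt hy.le, mul_comm]

theorem stmt_0_general (n : ℕ) (u : EuclideanSpace ℝ (Fin (n + 1)) → ℝ)
    (hconv : ConvexOn ℝ Set.univ u) (hu0 : u 0 = 0)
    (b : ℝ → ℝ)
    (hb : ∀ h : ℝ, b h =
      h ^ (-(1 : ℝ) / 2) * sSup ((fun x => x (Fin.last n)) '' {x | u x < h}))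
    (hbdd : ∀ h : ℝ, 0 < h → BddAbove ((fun x => x (Fin.last n)) '' {x | u x < h}))
    (hpos : ∀ h : ℝ, 0 < h → 0 < sSup ((fun x => x (Fin.last n)) '' {x | u x < h}))
    (h₁ h₂ : ℝ) (hh₁ : 0 < h₁) (hle : h₁ ≤ h₂) :
    Real.sqrt (h₁ / h₂) ≤ b h₁ / b h₂ ∧ b h₁ / b h₂ ≤ Real.sqrt (h₂ / h₁) := by
  have hh₂ : 0 < h₂ := hh₁.trans_le hle
  set M := fun h => sSup ((fun x => x (Fin.last n)) '' {x | u x < h})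
  have hM₂ : 0 < M h₂ := hpos h₂ hh₂
  have hmono : M h₁ ≤ M h₂ :=
    sSup_image_sublevel_mono _ hle ⟨0, hu0.trans_lt hh₁⟩ (hbdd h₂ hh₂)
  have hscale : h₁ / h₂ * M h₂ ≤ M h₁ :=
    hconv.div_mul_sSup_image_sublevel_le hu0.le (EuclideanSpace.proj (Fin.last n)).toLinearMap
      hh₁ hle (hbdd h₁ hh₁)
  rw [hb, hb, rpow_neg_half_mul_div_rpow_neg_half_mul hh₁ hh₂]
  constructor
  · rw [Real.sqrt_div_eq_sqrt_div_mul hh₁ hh₂]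
    exact mul_le_mul_of_nonneg_left ((le_div_iff₀ hM₂).2 hscale) (Real.sqrt_nonneg _)
  · exact mul_le_of_le_one_right (Real.sqrt_nonneg _) ((div_le_one hM₂).2 hmono)

/-- For a nonnegative convex function `u` with `u 0 = 0`, the quantity
`b(h) = h^{-1/2} · sup_{S_h} x_n` over the section `S_h = {u < h}` satisfies
`(h₁/h₂)^{1/2} ≤ b(h₁)/b(h₂) ≤ (h₂/h₁)^{1/2}` for `0 < h₁ ≤ h₂`. -/
theorem stmt_0 (n : ℕ) (u : EuclideanSpace ℝ (Fin (n + 1)) → ℝ)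
    (hconv : ConvexOn ℝ Set.univ u) (hnonneg : ∀ x, 0 ≤ u x) (hu0 : u 0 = 0)
    (b : ℝ → ℝ)
    (hb : ∀ h : ℝ, b h =
      h ^ (-(1 : ℝ) / 2) * sSup ((fun x => x (Fin.last n)) '' {x | u x < h}))
    (hbdd : ∀ h : ℝ, 0 < h → BddAbove ((fun x => x (Fin.last n)) '' {x | u x < h}))
    (hpos : ∀ h : ℝ, 0 < h → 0 < sSup ((fun x => x (Fin.last n)) '' {x | u x < h}))
    (h₁ h₂ : ℝ) (hh₁ : 0 < h₁) (hle : h₁ ≤ h₂) :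
    Real.sqrt (h₁ / h₂) ≤ b h₁ / b h₂ ∧ b h₁ / b h₂ ≤ Real.sqrt (h₂ / h₁) :=
  stmt_0_general n u hconv hu0 b hb hbdd hpos h₁ h₂ hh₁ hle
end

section
/- Let Ω ⊂ ℝⁿ be a bounded open convex set and u a convex function on Ω, continuous up to the boundary, with det D²u ≥ λ > 0 (in the Alexandrov sense) and u = h on ∂Ω for a constant h > 0, u ≥ 0 in Ω. Then h ≥ c(n, λ) |Ω|^{2/n} for a dimensional constant c(n,λ) > 0; equivalently |Ω| ≤ C(n, λ) h^{n/2}. -/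
/-!
Take a simplex `v 0, …, v n` of maximal volume with vertices in `K = closure Ω`, and let `U` be
its edge matrix, `D = |det U|`. Maximality and Cramer's rule put `K` inside `v 0 + U [-1, 1]ⁿ`,
so `|Ω| ≤ 2ⁿ D`. The open set `E = simplexCore v = v 0 + U (1/(4n), 1/(2n))ⁿ` lies in the
simplex, hence in `Ω`, and has volume `D (4n)⁻ⁿ`. Since `0 ≤ u ≤ h`, a subgradient `p` at
`x ∈ E` satisfies `⟪p, y - x⟫ ≤ h` for all `y ∈ K`; testing this at the vertices bounds every
coordinate of `Uᵀ p`, so `∂u(E)` lies in a parallelepiped of volume `D⁻¹ ((8n+2) h)ⁿ`.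
Now `Mu(E) ≥ λ|E|` gives `λ D² ≤ (4n (8n+2) h)ⁿ`, hence `λ |Ω|² ≤ (16n (8n+2) h)ⁿ`.
-/

open Set MeasureTheory
open scoped RealInnerProductSpace Pointwise

def subgradientAt (n : ℕ) (u : EuclideanSpace ℝ (Fin n) → ℝ)
    (s : Set (EuclideanSpace ℝ (Fin n))) (x : EuclideanSpace ℝ (Fin n)) :
    Set (EuclideanSpace ℝ (Fin n)) :=
  {p | ∀ y ∈ s, u x + ⟪p, y - x⟫ ≤ u y}

theorem EuclideanSpace.setOf_forall_mem_eq_preimage {ι : Type*} (S : Set ℝ) :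
    {w : EuclideanSpace ℝ ι | ∀ j, w j ∈ S} = WithLp.ofLp ⁻¹' univ.pi fun _ => S := by
  ext; simp

theorem EuclideanSpace.isOpen_setOf_forall_mem {ι : Type*} [Finite ι] {S : Set ℝ}
    (hS : IsOpen S) : IsOpen {w : EuclideanSpace ℝ ι | ∀ j, w j ∈ S} := by
  rw [EuclideanSpace.setOf_forall_mem_eq_preimage]
  exact (isOpen_set_pi finite_univ fun _ _ => hS).preimage (PiLp.continuous_ofLp 2 _)

theorem EuclideanSpace.volume_setOf_forall_mem {ι : Type*} [Fintype ι] (S : Set ℝ) :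
    volume {w : EuclideanSpace ℝ ι | ∀ j, w j ∈ S} = volume S ^ Fintype.card ι := by
  rw [EuclideanSpace.setOf_forall_mem_eq_preimage, ← MeasurableEquiv.coe_toLp_symm,
    (EuclideanSpace.volume_preserving_symm_measurableEquiv_toLp ι).measure_preimage_equiv,
    volume_pi_pi, Finset.prod_const, Finset.card_univ]

theorem volume_vadd_image_toEuclideanLin {ι : Type*} [Fintype ι] [DecidableEq ι]
    (a : EuclideanSpace ℝ ι) (U : Matrix ι ι ℝ) (S : Set (EuclideanSpace ℝ ι)) :
    volume (a +ᵥ Matrix.toEuclideanLin U '' S) = ENNReal.ofReal |U.det| * volume S := by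
  rw [measure_vadd, Measure.addHaar_image_linearMap, LinearMap.det_toLpLin]

theorem Convex.add_sum_smul_sub_mem {E ι : Type*} [AddCommGroup E] [Module ℝ E] [Fintype ι]
    {s : Set E} (hs : Convex ℝ s) {a : E} {v : ι → E} (ha : a ∈ s) (hv : ∀ j, v j ∈ s)
    {t : ι → ℝ} (ht₀ : ∀ j, 0 ≤ t j) (ht₁ : ∑ j, t j ≤ 1) :
    a + ∑ j, t j • (v j - a) ∈ s := by
  have key := hs.sum_mem (t := Finset.univ) (w := fun o : Option ι => o.elim (1 - ∑ j, t j) t)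
    (z := fun o => o.elim a v) (by rintro (_ | j) - <;> simp [ht₀, ht₁])
    (by simp [Fintype.sum_option]) (by rintro (_ | j) - <;> simp [ha, hv])
  convert key using 1
  simp [Fintype.sum_option, smul_sub, sub_smul, Finset.sum_smul]
  abel

theorem mem_Icc_of_sub_sum_mul_le {ι : Type*} [Fintype ι] {w q : ι → ℝ} {a h : ℝ}
    (ha : 0 < a) (hw : ∀ j, a ≤ w j) (hw₁ : ∑ j, w j ≤ 1 / 2)
    (h₀ : -∑ j, w j * q j ≤ h) (hq : ∀ j, q j - ∑ k, w k * q k ≤ h) (j : ι) :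
    q j ∈ Icc (-(2 * h / a)) (2 * h) := by
  classical
  set m := ∑ k, w k * q k
  have hw₀ : ∀ k, 0 ≤ w k := fun k => ha.le.trans (hw k)
  have hm : m ≤ h := by
    have : m ≤ (∑ k, w k) * (h + m) := by
      rw [Finset.sum_mul]
      exact Finset.sum_le_sum fun k _ => mul_le_mul_of_nonneg_left (by linarith [hq k]) (hw₀ k)
    nlinarith
  have hq₂ : ∀ k, q k ≤ 2 * h := fun k => by linarith [hq k]
  have hrest : ∑ k ∈ Finset.univ.erase j, w k * q k ≤ h := by
    calc ∑ k ∈ Finset.univ.erase j, w k * q k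
        ≤ ∑ k ∈ Finset.univ.erase j, w k * (2 * h) :=
          Finset.sum_le_sum fun k _ => mul_le_mul_of_nonneg_left (hq₂ k) (hw₀ k)
      _ ≤ (∑ k, w k) * (2 * h) := by
          rw [← Finset.sum_mul]
          exact mul_le_mul_of_nonneg_right (Finset.sum_le_sum_of_subset_of_nonneg
            (Finset.erase_subset _ _) fun k _ _ => hw₀ k) (by linarith)
      _ ≤ h := by nlinarith
  have hj : -(2 * h) ≤ w j * q j := by
    have : m = w j * q j + ∑ k ∈ Finset.univ.erase j, w k * q k :=
      (Finset.add_sum_erase _ _ (Finset.mem_univ j)).symm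
    linarith
  refine ⟨?_, hq₂ j⟩
  rw [neg_le, le_div_iff₀ ha]
  nlinarith [hw j]

theorem inner_sub_le_of_mem_subgradientAt {n : ℕ} {u : EuclideanSpace ℝ (Fin n) → ℝ}
    {s : Set (EuclideanSpace ℝ (Fin n))} {h : ℝ} (hu₀ : ∀ y ∈ s, 0 ≤ u y)
    (hu : ∀ y ∈ s, u y ≤ h) {x p : EuclideanSpace ℝ (Fin n)} (hx : x ∈ s)
    (hp : p ∈ subgradientAt n u s x) {y : EuclideanSpace ℝ (Fin n)} (hy : y ∈ s) :
    ⟪p, y - x⟫ ≤ h := by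
  linarith [hp y hy, hu y hy, hu₀ x hx]

section Simplex

variable {n : ℕ}

def edgeMatrix (v : Fin (n + 1) → EuclideanSpace ℝ (Fin n)) : Matrix (Fin n) (Fin n) ℝ :=
  Matrix.of fun i j => (v j.succ - v 0) i

theorem continuous_edgeMatrix : Continuous (edgeMatrix (n := n)) :=
  continuous_matrix fun i j =>
    ((EuclideanSpace.proj i).continuous.comp (continuous_apply j.succ)).sub
      ((EuclideanSpace.proj i).continuous.comp (continuous_apply 0))

theorem toEuclideanLin_edgeMatrix (v : Fin (n + 1) → EuclideanSpace ℝ (Fin n))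
    (t : EuclideanSpace ℝ (Fin n)) :
    Matrix.toEuclideanLin (edgeMatrix v) t = ∑ j, t j • (v j.succ - v 0) := by
  ext i
  simp [edgeMatrix, Matrix.mulVec, dotProduct, mul_comm]

theorem toEuclideanLin_transpose_edgeMatrix (v : Fin (n + 1) → EuclideanSpace ℝ (Fin n))
    (p : EuclideanSpace ℝ (Fin n)) (j : Fin n) :
    Matrix.toEuclideanLin (edgeMatrix v).transpose p j = ⟪p, v j.succ - v 0⟫ := by
  simp [edgeMatrix, Matrix.mulVec, dotProduct, PiLp.inner_apply, mul_comm]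

theorem edgeMatrix_update_succ (v : Fin (n + 1) → EuclideanSpace ℝ (Fin n)) (j : Fin n)
    (y : EuclideanSpace ℝ (Fin n)) :
    edgeMatrix (Function.update v j.succ y) = (edgeMatrix v).updateCol j (y - v 0) := by
  have h0 : Function.update v j.succ y 0 = v 0 :=
    Function.update_of_ne (Fin.succ_ne_zero j).symm _ _
  ext i k
  rcases eq_or_ne k j with rfl | hkj
  · simp [edgeMatrix, h0]
  · simp [edgeMatrix, hkj, h0]

def IsMaxSimplex (K : Set (EuclideanSpace ℝ (Fin n))) (v : Fin (n + 1) → EuclideanSpace ℝ (Fin n)) :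
    Prop :=
  (∀ i, v i ∈ K) ∧
    ∀ w : Fin (n + 1) → EuclideanSpace ℝ (Fin n), (∀ i, w i ∈ K) →
      |(edgeMatrix w).det| ≤ |(edgeMatrix v).det|

variable {K : Set (EuclideanSpace ℝ (Fin n))} {v : Fin (n + 1) → EuclideanSpace ℝ (Fin n)}

theorem exists_isMaxSimplex (hK : IsCompact K) (hne : K.Nonempty) : ∃ v, IsMaxSimplex K v := by
  obtain ⟨v, hv, hmax⟩ := (isCompact_univ_pi fun _ : Fin (n + 1) => hK).exists_isMaxOn
    (univ_pi_nonempty_iff.2 fun _ => hne)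
    continuous_edgeMatrix.matrix_det.abs.continuousOn
  exact ⟨v, fun i => hv i (mem_univ i), fun w hw => isMaxOn_iff.1 hmax w fun i _ => hw i⟩

theorem IsMaxSimplex.det_ne_zero (hv : IsMaxSimplex K v) (hK : (interior K).Nonempty) :
    (edgeMatrix v).det ≠ 0 := by
  obtain ⟨z, hz⟩ := hK
  obtain ⟨ε, hε, hball⟩ := Metric.isOpen_iff.1 isOpen_interior z hz
  let w : Fin (n + 1) → EuclideanSpace ℝ (Fin n) :=
    Fin.cons z fun j => z + EuclideanSpace.single j (ε / 2)
  have hw : ∀ i, w i ∈ K := by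
    refine Fin.cases (interior_subset hz) fun j => interior_subset (hball ?_)
    simp [w, abs_of_pos hε, hε]
  have hdiag : edgeMatrix w = Matrix.diagonal fun _ => ε / 2 := by
    ext i j
    simp [w, edgeMatrix, Matrix.diagonal_apply]
  have := hv.2 w hw
  rw [hdiag, Matrix.det_diagonal, Finset.prod_const, Finset.card_univ, Fintype.card_fin] at this
  exact abs_pos.1 (lt_of_lt_of_le (by positivity) this)

theorem IsMaxSimplex.abs_cramer_le (hv : IsMaxSimplex K v) {y : EuclideanSpace ℝ (Fin n)}
    (hy : y ∈ K) (j : Fin n) :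
    |(edgeMatrix v).cramer (y - v 0) j| ≤ |(edgeMatrix v).det| := by
  rw [Matrix.cramer_apply, ← edgeMatrix_update_succ]
  refine hv.2 _ fun i => ?_
  rcases eq_or_ne i j.succ with rfl | hi
  · simpa using hy
  · simpa [hi] using hv.1 i

theorem IsMaxSimplex.subset_vadd_image_cube (hv : IsMaxSimplex K v)
    (hdet : (edgeMatrix v).det ≠ 0) :
    K ⊆ v 0 +ᵥ Matrix.toEuclideanLin (edgeMatrix v) '' {t | ∀ j, t j ∈ Icc (-1) 1} := by
  intro y hy
  refine ⟨_, ⟨WithLp.toLp 2 ((edgeMatrix v).det⁻¹ • (edgeMatrix v).cramer (y - v 0)),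
    fun j => ?_, rfl⟩, ?_⟩
  · rw [mem_Icc, ← abs_le]
    simpa [abs_mul, inv_mul_le_iff₀ (abs_pos.2 hdet)] using hv.abs_cramer_le hy j
  · ext i
    simp [Matrix.mulVec_cramer]
    field_simp
    ring

theorem IsMaxSimplex.volume_le (hv : IsMaxSimplex K v) (hdet : (edgeMatrix v).det ≠ 0) :
    volume K ≤ ENNReal.ofReal (|(edgeMatrix v).det| * 2 ^ n) := by
  refine (measure_mono (hv.subset_vadd_image_cube hdet)).trans_eq ?_
  rw [volume_vadd_image_toEuclideanLin, EuclideanSpace.volume_setOf_forall_mem, Real.volume_Icc,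
    Fintype.card_fin, ENNReal.ofReal_mul (abs_nonneg _), ENNReal.ofReal_pow (by norm_num)]
  norm_num

def simplexCore (v : Fin (n + 1) → EuclideanSpace ℝ (Fin n)) : Set (EuclideanSpace ℝ (Fin n)) :=
  v 0 +ᵥ Matrix.toEuclideanLin (edgeMatrix v) ''
    {t | ∀ j, t j ∈ Ioo (1 / (4 * n : ℝ)) (1 / (2 * n))}

theorem sum_le_half_of_forall_lt {t : Fin n → ℝ} (ht : ∀ j, t j < 1 / (2 * n)) :
    ∑ j, t j ≤ 1 / 2 := by
  calc ∑ j, t j ≤ ∑ _j : Fin n, 1 / (2 * (n : ℝ)) := Finset.sum_le_sum fun j _ => (ht j).le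
    _ ≤ 1 / 2 := by
      rw [Finset.sum_const, Finset.card_univ, Fintype.card_fin, nsmul_eq_mul, mul_one_div]
      rcases n.eq_zero_or_pos with rfl | hn
      · norm_num
      · rw [div_le_iff₀ (by positivity)]
        linarith

theorem Convex.simplexCore_subset (hK : Convex ℝ K) (hv : ∀ i, v i ∈ K) : simplexCore v ⊆ K := by
  rintro _ ⟨_, ⟨t, ht, rfl⟩, rfl⟩
  have := hK.add_sum_smul_sub_mem (hv 0) (fun j => hv j.succ)
    (fun j => (ht j).1.le.trans' (by positivity))
    ((sum_le_half_of_forall_lt fun j => (ht j).2).trans (by norm_num))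
  rwa [← toEuclideanLin_edgeMatrix] at this

theorem isOpen_simplexCore (hdet : (edgeMatrix v).det ≠ 0) : IsOpen (simplexCore v) := by
  refine IsOpen.vadd (LinearMap.isOpenMap_of_finiteDimensional _ ?_ _
    (EuclideanSpace.isOpen_setOf_forall_mem isOpen_Ioo)) _
  exact (LinearMap.equivOfDetNeZero (Matrix.toEuclideanLin (edgeMatrix v))
    (by rwa [LinearMap.det_toLpLin])).surjective

theorem volume_simplexCore :
    volume (simplexCore v) = ENNReal.ofReal (|(edgeMatrix v).det| * (1 / (4 * n : ℝ)) ^ n) := by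
  rw [simplexCore, volume_vadd_image_toEuclideanLin, EuclideanSpace.volume_setOf_forall_mem,
    Real.volume_Ioo, Fintype.card_fin,
    show (1 / (2 * n : ℝ)) - 1 / (4 * n) = 1 / (4 * n) by ring,
    ← ENNReal.ofReal_pow (by positivity), ← ENNReal.ofReal_mul (abs_nonneg _)]

theorem subgradientAt_subset_of_mem_simplexCore {u : EuclideanSpace ℝ (Fin n) → ℝ} {h : ℝ}
    (hK : Convex ℝ K) (hu₀ : ∀ y ∈ K, 0 ≤ u y) (hu : ∀ y ∈ K, u y ≤ h) (hv : ∀ i, v i ∈ K)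
    {x : EuclideanSpace ℝ (Fin n)} (hx : x ∈ simplexCore v) :
    subgradientAt n u K x ⊆ Matrix.toEuclideanLin (edgeMatrix v).transpose ⁻¹'
      {q | ∀ j, q j ∈ Icc (-(8 * n * h)) (2 * h)} := by
  have hxK := hK.simplexCore_subset hv hx
  obtain ⟨_, ⟨w, hw, rfl⟩, rfl⟩ := hx
  intro p hp j
  have hosc := fun y (hy : y ∈ K) => inner_sub_le_of_mem_subgradientAt hu₀ hu hxK hp hy
  have hpw : ⟪p, Matrix.toEuclideanLin (edgeMatrix v) w⟫ = ∑ k, w k * ⟪p, v k.succ - v 0⟫ := by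
    simp [toEuclideanLin_edgeMatrix, inner_sum, inner_smul_right]
  have hn : (0 : ℝ) < n := Nat.cast_pos.2 j.pos
  rw [toEuclideanLin_transpose_edgeMatrix]
  have key := mem_Icc_of_sub_sum_mul_le (h := h) (q := fun k => ⟪p, v k.succ - v 0⟫)
    (by positivity) (fun k => (hw k).1.le) (sum_le_half_of_forall_lt fun k => (hw k).2) ?_
    (fun k => ?_) j
  · rwa [show 2 * h / (1 / (4 * n)) = 8 * n * h by field_simp; ring] at key
  · simpa [← hpw] using hosc _ (hv 0)
  · have := hosc _ (hv k.succ)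
    rwa [show v k.succ - (v 0 +ᵥ Matrix.toEuclideanLin (edgeMatrix v) w)
        = (v k.succ - v 0) - Matrix.toEuclideanLin (edgeMatrix v) w by rw [vadd_eq_add]; abel,
      inner_sub_right, hpw] at this

theorem volume_preimage_transpose_edgeMatrix (hdet : (edgeMatrix v).det ≠ 0) {h : ℝ}
    (hh : 0 ≤ h) :
    volume (Matrix.toEuclideanLin (edgeMatrix v).transpose ⁻¹'
        {q | ∀ j, q j ∈ Icc (-(8 * n * h)) (2 * h)}) =
      ENNReal.ofReal (|(edgeMatrix v).det|⁻¹ * ((8 * n + 2) * h) ^ n) := by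
  rw [Measure.addHaar_preimage_linearMap _
      (by rwa [LinearMap.det_toLpLin, Matrix.det_transpose]),
    LinearMap.det_toLpLin, Matrix.det_transpose, EuclideanSpace.volume_setOf_forall_mem,
    Real.volume_Icc, Fintype.card_fin, abs_inv,
    show 2 * h - -(8 * n * h) = (8 * n + 2) * h by ring,
    ← ENNReal.ofReal_pow (by positivity), ← ENNReal.ofReal_mul (by positivity)]

end Simplex

theorem lam_mul_det_edgeMatrix_sq_le {n : ℕ} {lam h : ℝ} (hlam : 0 ≤ lam) (hh : 0 ≤ h)
    {Ω K : Set (EuclideanSpace ℝ (Fin n))} {u : EuclideanSpace ℝ (Fin n) → ℝ}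
    {v : Fin (n + 1) → EuclideanSpace ℝ (Fin n)} (hK : Convex ℝ K)
    (hu₀ : ∀ x ∈ K, 0 ≤ u x) (hu : ∀ x ∈ K, u x ≤ h)
    (hv : ∀ i, v i ∈ K) (hdet : (edgeMatrix v).det ≠ 0) (hcore : simplexCore v ⊆ Ω)
    (hMA : ∀ E ⊆ Ω, MeasurableSet E →
      ENNReal.ofReal lam * volume E ≤ volume (⋃ x ∈ E, subgradientAt n u K x)) :
    lam * (edgeMatrix v).det ^ 2 ≤ (4 * n * ((8 * n + 2) * h)) ^ n := by
  set D := |(edgeMatrix v).det|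
  have hD : 0 < D := abs_pos.2 hdet
  have hsub : ⋃ x ∈ simplexCore v, subgradientAt n u K x ⊆
      Matrix.toEuclideanLin (edgeMatrix v).transpose ⁻¹'
        {q | ∀ j, q j ∈ Icc (-(8 * n * h)) (2 * h)} :=
    iUnion₂_subset fun x hx => subgradientAt_subset_of_mem_simplexCore hK hu₀ hu hv hx
  have hvol := (hMA _ hcore (isOpen_simplexCore hdet).measurableSet).trans (measure_mono hsub)
  rw [volume_simplexCore, volume_preimage_transpose_edgeMatrix hdet hh,
    ← ENNReal.ofReal_mul hlam, ENNReal.ofReal_le_ofReal_iff (by positivity)] at hvol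
  have hpow : (1 / (4 * n : ℝ)) ^ n * (4 * n) ^ n = 1 := by
    rcases n.eq_zero_or_pos with rfl | hn
    · simp
    · rw [← mul_pow, one_div, inv_mul_cancel₀ (by positivity), one_pow]
  calc lam * (edgeMatrix v).det ^ 2
        = lam * D ^ 2 * ((1 / (4 * n : ℝ)) ^ n * (4 * n) ^ n) := by rw [hpow, mul_one, sq_abs]
    _ = D * (lam * (D * (1 / (4 * n)) ^ n)) * (4 * n) ^ n := by ring
    _ ≤ D * (D⁻¹ * ((8 * n + 2) * h) ^ n) * (4 * n) ^ n := by gcongr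
    _ = (4 * n * ((8 * n + 2) * h)) ^ n := by
        rw [← mul_assoc, mul_inv_cancel₀ hD.ne', one_mul, mul_comm, ← mul_pow]

theorem lam_mul_toReal_volume_sq_le {n : ℕ} {lam h : ℝ} (hlam : 0 ≤ lam)
    {Ω : Set (EuclideanSpace ℝ (Fin n))} {u : EuclideanSpace ℝ (Fin n) → ℝ}
    (hO : IsOpen Ω) (hC : Convex ℝ Ω) (hB : Bornology.IsBounded Ω) (hne : Ω.Nonempty)
    (hu₀ : ∀ x ∈ closure Ω, 0 ≤ u x) (hu : ∀ x ∈ closure Ω, u x ≤ h)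
    (hMA : ∀ E ⊆ Ω, MeasurableSet E →
      ENNReal.ofReal lam * volume E ≤ volume (⋃ x ∈ E, subgradientAt n u (closure Ω) x)) :
    lam * (volume Ω).toReal ^ 2 ≤ (16 * n * (8 * n + 2) * h) ^ n := by
  have hint : interior (closure Ω) = Ω := by
    rw [hC.interior_closure_eq_interior_of_nonempty_interior (by rwa [hO.interior_eq]),
      hO.interior_eq]
  have hh : 0 ≤ h :=
    (hu₀ _ (subset_closure hne.some_mem)).trans (hu _ (subset_closure hne.some_mem))
  obtain ⟨v, hv⟩ := exists_isMaxSimplex hB.isCompact_closure hne.closure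
  have hdet : (edgeMatrix v).det ≠ 0 := hv.det_ne_zero (by rwa [hint])
  have hcore : simplexCore v ⊆ Ω :=
    hint ▸ interior_maximal (hC.closure.simplexCore_subset hv.1) (isOpen_simplexCore hdet)
  have hΩ : (volume Ω).toReal ≤ |(edgeMatrix v).det| * 2 ^ n :=
    ENNReal.toReal_le_of_le_ofReal (by positivity)
      ((measure_mono subset_closure).trans (hv.volume_le hdet))
  calc lam * (volume Ω).toReal ^ 2 ≤ lam * (|(edgeMatrix v).det| * 2 ^ n) ^ 2 := by gcongr
    _ = lam * (edgeMatrix v).det ^ 2 * 4 ^ n := by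
        rw [mul_pow, sq_abs, ← pow_mul, mul_comm n 2, pow_mul]; ring
    _ ≤ (4 * n * ((8 * n + 2) * h)) ^ n * 4 ^ n := by
        gcongr
        exact lam_mul_det_edgeMatrix_sq_le hlam hh hC.closure hu₀ hu hv.1 hdet hcore hMA
    _ = (16 * n * (8 * n + 2) * h) ^ n := by rw [← mul_pow]; ring

/-- Alexandrov-type volume estimate: if `u` is convex continuous on a bounded
convex `Ω`, `0 ≤ u ≤ h`, `u = h` on `∂Ω`, and the Monge–Ampère measure of `u` is at least
`λ·Lebesgue`, then `h ≥ c(n,λ)|Ω|^{2/n}`, i.e. `|Ω| ≤ C(n,λ) h^{n/2}`. -/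
theorem stmt_5 (n : ℕ) (hn : 1 ≤ n) (lam : ℝ) (hlam : 0 < lam) :
    ∃ c > (0 : ℝ), ∀ (Ω : Set (EuclideanSpace ℝ (Fin n)))
      (u : EuclideanSpace ℝ (Fin n) → ℝ) (h : ℝ),
      IsOpen Ω → Convex ℝ Ω → Bornology.IsBounded Ω → Ω.Nonempty → 0 < h →
      ConvexOn ℝ (closure Ω) u → ContinuousOn u (closure Ω) →
      (∀ x ∈ closure Ω, 0 ≤ u x) → (∀ x ∈ closure Ω, u x ≤ h) →
      (∀ x ∈ frontier Ω, u x = h) →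
      (∀ E : Set (EuclideanSpace ℝ (Fin n)), E ⊆ Ω → MeasurableSet E →
        ENNReal.ofReal lam * volume E ≤
          volume (⋃ x ∈ E, subgradientAt n u (closure Ω) x)) →
      c * (volume Ω).toReal ^ ((2 : ℝ) / n) ≤ h := by
  have hn' : (0 : ℝ) < n := by exact_mod_cast hn
  refine ⟨lam ^ (n : ℝ)⁻¹ / (16 * n * (8 * n + 2)), by positivity, ?_⟩
  intro Ω u h hO hC hB hne _ _ _ hu₀ hu _ hMA
  have key := lam_mul_toReal_volume_sq_le hlam.le hO hC hB hne hu₀ hu hMA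
  set V := (volume Ω).toReal
  have hroot : lam ^ (n : ℝ)⁻¹ * V ^ ((2 : ℝ) / n) = (lam * V ^ 2) ^ (n : ℝ)⁻¹ := by
    rw [Real.mul_rpow hlam.le (by positivity), ← Real.rpow_natCast V 2,
      ← Real.rpow_mul ENNReal.toReal_nonneg, div_eq_mul_inv, Nat.cast_ofNat]
  rw [div_mul_eq_mul_div, div_le_iff₀ (by positivity), hroot,
    Real.rpow_inv_le_iff_of_pos (by positivity) (by positivity) hn', Real.rpow_natCast]
  rwa [mul_comm h]
end

section
/- Let b : (0, h₀] → (0, ∞) satisfy: (i) for all 0 < h₁ ≤ h₂ ≤ h₀, b(h₁)/b(h₂) ≥ (h₁/h₂)^{1/2}; and (ii) there exist constants c₀ ∈ (0,1) and a threshold value v₀ > 0 such that whenever h ≤ h₀ and b(h) ≤ v₀, there exists t ∈ [c₀, 1] with b(t h) ≥ 2 b(h). Then there exists c > 0, depending only on c₀, v₀, b(h₀), such that b(h) ≥ c for all h ∈ (0, h₀]. -/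
open Set

/-- Abstract iteration lemma: if `b : (0, h₀] → (0, ∞)` satisfies
(i) `b(h₁)/b(h₂) ≥ (h₁/h₂)^{1/2}` for `0 < h₁ ≤ h₂ ≤ h₀`, and (ii) whenever `b(h) ≤ v₀`
there is `t ∈ [c₀, 1]` with `b(th) ≥ 2 b(h)`, then `b` is bounded below on `(0, h₀]` by a
constant `c > 0` depending only on `c₀, v₀, b(h₀)`. -/
theorem stmt_10 (c₀ v₀ β : ℝ) (hc₀ : 0 < c₀) (hc₀1 : c₀ < 1) (hv₀ : 0 < v₀) (hβ : 0 < β) :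
    ∃ c > (0 : ℝ), ∀ (h₀ : ℝ) (b : ℝ → ℝ), 0 < h₀ → b h₀ = β →
      (∀ h ∈ Set.Ioc (0 : ℝ) h₀, 0 < b h) →
      (∀ h₁ h₂ : ℝ, 0 < h₁ → h₁ ≤ h₂ → h₂ ≤ h₀ →
        Real.sqrt (h₁ / h₂) ≤ b h₁ / b h₂) →
      (∀ h : ℝ, 0 < h → h ≤ h₀ → b h ≤ v₀ →
        ∃ t ∈ Set.Icc c₀ 1, 2 * b h ≤ b (t * h)) →
      ∀ h ∈ Set.Ioc (0 : ℝ) h₀, c ≤ b h := by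
  set m : ℝ := min β v₀ with hm
  have hmpos : 0 < m := lt_min hβ hv₀
  have hs : 0 < Real.sqrt c₀ := Real.sqrt_pos.mpr hc₀
  have hs1 : Real.sqrt c₀ ≤ 1 := by
    rw [show (1:ℝ) = Real.sqrt 1 by simp]
    exact Real.sqrt_le_sqrt hc₀1.le
  obtain ⟨J, hJ⟩ : ∃ J : ℕ, 1 / Real.sqrt c₀ < 2 ^ J :=
    pow_unbounded_of_one_lt _ one_lt_two
  refine ⟨c₀ * m, by positivity, ?_⟩
  intro h₀ b hh₀ hbh₀ hpos hmono hdbl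
  -- basic monotonicity consequence
  have mono : ∀ x p : ℝ, 0 < x → x ≤ p → p ≤ h₀ →
      Real.sqrt (x / p) * b p ≤ b x := by
    intro x p hx hxp hp
    have h1 := hmono x p hx hxp hp
    have hbp := hpos p ⟨lt_of_lt_of_le hx hxp, hp⟩
    rwa [le_div_iff₀ hbp] at h1
  -- direct estimate within one scale step
  have direct : ∀ x p : ℝ, 0 < p → p ≤ h₀ → Real.sqrt c₀ * m ≤ b p →
      c₀ * p ≤ x → x ≤ p → Real.sqrt c₀ * (Real.sqrt c₀ * m) ≤ b x := by
    intro x p hp hph0 hbm hcx hxp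
    have hx : 0 < x := lt_of_lt_of_le (by positivity) hcx
    have hrat : c₀ ≤ x / p := (le_div_iff₀ hp).2 (by linarith)
    have hsr : Real.sqrt c₀ ≤ Real.sqrt (x / p) := Real.sqrt_le_sqrt hrat
    have h1 : Real.sqrt c₀ * (Real.sqrt c₀ * m) ≤ Real.sqrt (x / p) * b p := by
      apply mul_le_mul hsr hbm (by positivity) (Real.sqrt_nonneg _)
    exact h1.trans (mono x p hx hxp hph0)
  have key : ∀ k j : ℕ, ∀ p : ℝ, 0 < p → p ≤ h₀ → Real.sqrt c₀ * m ≤ b p →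
      v₀ / 2 ^ j ≤ b p → ∀ x : ℝ, c₀ ^ k * p ≤ x → x ≤ p →
      Real.sqrt c₀ * (Real.sqrt c₀ * m) ≤ b x := by
    intro k
    induction k with
    | zero =>
      intro j p hp hph0 hbm _ x hx1 hx2
      have hxe : x = p := le_antisymm hx2 (by simpa using hx1)
      subst hxe
      calc Real.sqrt c₀ * (Real.sqrt c₀ * m) ≤ 1 * (Real.sqrt c₀ * m) := by
            apply mul_le_mul_of_nonneg_right hs1 (by positivity)
        _ = Real.sqrt c₀ * m := one_mul _
        _ ≤ b x := hbm
    | succ k ih =>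
      intro j
      induction j with
      | zero =>
        intro p hp hph0 hbm hbv x hx1 hx2
        simp only [pow_zero, div_one] at hbv
        rcases le_or_gt (c₀ * p) x with hcase | hcase
        · exact direct x p hp hph0 hbm hcase hx2
        · -- move down to p' = c₀ * p
          have hp' : 0 < c₀ * p := by positivity
          have hp'le : c₀ * p ≤ p := by nlinarith
          have hbp' : Real.sqrt c₀ * v₀ ≤ b (c₀ * p) := by
            have h1 := mono (c₀ * p) p hp' hp'le hph0
            have h2 : Real.sqrt (c₀ * p / p) = Real.sqrt c₀ := by
              rw [mul_div_assoc, div_self hp.ne', mul_one]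
            rw [h2] at h1
            calc Real.sqrt c₀ * v₀ ≤ Real.sqrt c₀ * b p :=
                  mul_le_mul_of_nonneg_left hbv hs.le
              _ ≤ b (c₀ * p) := h1
          have hbm' : Real.sqrt c₀ * m ≤ b (c₀ * p) := by
            calc Real.sqrt c₀ * m ≤ Real.sqrt c₀ * v₀ :=
                  mul_le_mul_of_nonneg_left (min_le_right _ _) hs.le
              _ ≤ b (c₀ * p) := hbp'
          have hbj' : v₀ / 2 ^ J ≤ b (c₀ * p) := by
            have h2J : (0:ℝ) < 2 ^ J := by positivity
            have : v₀ / 2 ^ J ≤ Real.sqrt c₀ * v₀ := by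
              rw [div_le_iff₀ h2J]
              have h3 : 1 ≤ Real.sqrt c₀ * 2 ^ J := by
                rw [div_lt_iff₀ hs] at hJ
                nlinarith
              nlinarith
            exact this.trans hbp'
          apply ih J (c₀ * p) hp' (hp'le.trans hph0) hbm' hbj' x _ hcase.le
          calc c₀ ^ k * (c₀ * p) = c₀ ^ (k + 1) * p := by ring
            _ ≤ x := hx1
      | succ j ihj =>
        intro p hp hph0 hbm hbj x hx1 hx2
        rcases le_or_gt (v₀ / 2 ^ j) (b p) with hc | hc
        · exact ihj p hp hph0 hbm hc x hx1 hx2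
        · have h2j : (0:ℝ) < 2 ^ j := by positivity
          have h1j : (1:ℝ) ≤ 2 ^ j := one_le_pow₀ (by norm_num)
          have hbv : b p ≤ v₀ :=
            hc.le.trans (div_le_self hv₀.le h1j)
          obtain ⟨t, ⟨ht1, ht2⟩, hdb⟩ := hdbl p hp hph0 hbv
          have htp : 0 < t := lt_of_lt_of_le hc₀ ht1
          have hp' : 0 < t * p := mul_pos htp hp
          have hp'le : t * p ≤ p := by nlinarith
          have hbppos : 0 < b p := hpos p ⟨hp, hph0⟩
          have hbm' : Real.sqrt c₀ * m ≤ b (t * p) := by nlinarith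
          have hbj' : v₀ / 2 ^ j ≤ b (t * p) := by
            have h2 : v₀ / 2 ^ (j + 1) ≤ b p := hbj
            have h3 : (2:ℝ) ^ (j + 1) = 2 * 2 ^ j := by ring
            rw [h3, div_mul_eq_div_div_swap] at h2
            linarith
          rcases le_or_gt x (t * p) with hxp' | hxp'
          · apply ihj (t * p) hp' (hp'le.trans hph0) hbm' hbj' x _ hxp'
            calc c₀ ^ (k + 1) * (t * p) ≤ c₀ ^ (k + 1) * p := by
                  apply mul_le_mul_of_nonneg_left hp'le (by positivity)
              _ ≤ x := hx1
          · have hcx : c₀ * p ≤ x := le_trans (by nlinarith) hxp'.le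
            exact direct x p hp hph0 hbm hcx hx2
  intro h hh
  obtain ⟨hhpos, hhle⟩ := hh
  obtain ⟨k, hk⟩ : ∃ k : ℕ, c₀ ^ k < h / h₀ :=
    exists_pow_lt_of_lt_one (div_pos hhpos hh₀) hc₀1
  obtain ⟨j, hj⟩ : ∃ j : ℕ, v₀ / β < 2 ^ j :=
    pow_unbounded_of_one_lt _ one_lt_two
  have hbm0 : Real.sqrt c₀ * m ≤ b h₀ := by
    rw [hbh₀]
    calc Real.sqrt c₀ * m ≤ 1 * m := mul_le_mul_of_nonneg_right hs1 hmpos.le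
      _ = m := one_mul _
      _ ≤ β := min_le_left _ _
  have hbj0 : v₀ / 2 ^ j ≤ b h₀ := by
    rw [hbh₀]
    have h2j : (0:ℝ) < 2 ^ j := by positivity
    rw [div_le_iff₀ h2j]
    rw [div_lt_iff₀ hβ] at hj
    nlinarith
  have hx1 : c₀ ^ k * h₀ ≤ h := ((lt_div_iff₀ hh₀).1 hk).le
  have := key k j h₀ hh₀ le_rfl hbm0 hbj0 h hx1 hhle
  calc c₀ * m = Real.sqrt c₀ * (Real.sqrt c₀ * m) := by
        rw [← mul_assoc, Real.mul_self_sqrt hc₀.le]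
    _ ≤ b h := this
end

section
/- Let f(θ) = σ e^{C₀|π/2 − θ|} for constants σ > 0, C₀ > 0, defined for θ ∈ [θ₀, π/2) ∪ (π/2, π − θ₀]. Then f'' + f = (C₀² + 1) f, and consequently for any Λ, M, θ₀ > 0, if C₀² + 1 > 2 Λ M⁴ / sin⁴θ₀, then at any point (r, θ) with f(θ)/r ≥ sin²θ/(2M²) the function v = r f(θ) + x₂²/(2M²) satisfies det D²v = (f''+f) sin²θ/(r M²) ≥ (C₀²+1) sin⁴θ₀/(2M⁴) > Λ. -/
/-!
Away from `θ = π/2` the function `σ e^{C₀|π/2 - θ|}` coincides near `θ` with an exponential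
`σ e^{±C₀ θ + c}`, whose second derivative is `C₀²` times itself; hence `f'' + f = (C₀² + 1) f`.
For the determinant, write `(f'' + f) sin²θ / (r M²) = (C₀² + 1) (sin²θ / M²) (f / r)`, bound
`f / r` below by `sin²θ / (2M²)`, and use `sin θ ≥ sin θ₀` on `[θ₀, π - θ₀]`.
-/

open Set Real Filter Topology

lemma hasDerivAt_const_mul_exp_affine (a b c x : ℝ) :
    HasDerivAt (fun x => a * exp (b * x + c)) (b * (a * exp (b * x + c))) x := by
  have h := ((((hasDerivAt_id' x).const_mul b).add_const c).exp).const_mul a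
  exact h.congr_deriv (by ring)

lemma deriv_deriv_const_mul_exp_affine (a b c x : ℝ) :
    deriv (deriv fun x => a * exp (b * x + c)) x = b ^ 2 * (a * exp (b * x + c)) := by
  have hderiv : deriv (fun x => a * exp (b * x + c)) = fun x => b * (a * exp (b * x + c)) :=
    funext fun x => (hasDerivAt_const_mul_exp_affine a b c x).deriv
  rw [hderiv, ((hasDerivAt_const_mul_exp_affine a b c x).const_mul b).deriv]
  ring

lemma deriv_deriv_of_eventuallyEq_exp_affine {f : ℝ → ℝ} {a b c x : ℝ}
    (h : f =ᶠ[𝓝 x] fun x => a * exp (b * x + c)) :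
    deriv (deriv f) x = b ^ 2 * f x := by
  rw [h.deriv.deriv_eq, deriv_deriv_const_mul_exp_affine, h.eq_of_nhds]

lemma deriv_deriv_const_mul_exp_abs {σ C : ℝ} {f : ℝ → ℝ}
    (hf : ∀ θ, f θ = σ * exp (C * |π / 2 - θ|)) {θ : ℝ} (hθ : θ ≠ π / 2) :
    deriv (deriv f) θ = C ^ 2 * f θ := by
  rcases hθ.lt_or_gt with hlt | hgt
  · have h : f =ᶠ[𝓝 θ] fun x => σ * exp (-C * x + C * (π / 2)) := by
      filter_upwards [Iio_mem_nhds hlt] with x hx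
      rw [hf, abs_of_pos (sub_pos.mpr hx)]
      ring_nf
    rw [deriv_deriv_of_eventuallyEq_exp_affine h, neg_sq]
  · have h : f =ᶠ[𝓝 θ] fun x => σ * exp (C * x + -C * (π / 2)) := by
      filter_upwards [Ioi_mem_nhds hgt] with x hx
      rw [hf, abs_of_neg (sub_neg.mpr hx)]
      ring_nf
    exact deriv_deriv_of_eventuallyEq_exp_affine h

lemma sin_le_sin_of_mem_Icc_pi_sub {θ₀ θ : ℝ} (hθ₀ : -(π / 2) ≤ θ₀)
    (hθ : θ ∈ Icc θ₀ (π - θ₀)) : sin θ₀ ≤ sin θ := by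
  rcases le_total θ (π / 2) with hle | hge
  · exact sin_le_sin_of_le_of_le_pi_div_two hθ₀ hle hθ.1
  · rw [← sin_pi_sub θ]
    exact sin_le_sin_of_le_of_le_pi_div_two hθ₀ (by linarith) (by linarith [hθ.2])

lemma le_mul_sq_div_of_sq_div_le {A F r M s₀ s : ℝ} (hA : 0 ≤ A) (hr : 0 < r)
    (hs₀ : 0 ≤ s₀) (hs : s₀ ≤ s) (hF : s ^ 2 / (2 * M ^ 2) ≤ F / r) :
    A * s₀ ^ 4 / (2 * M ^ 4) ≤ A * F * s ^ 2 / (r * M ^ 2) :=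
  calc A * s₀ ^ 4 / (2 * M ^ 4)
      ≤ A * s ^ 4 / (2 * M ^ 4) := by gcongr
    _ = A * s ^ 2 / M ^ 2 * (s ^ 2 / (2 * M ^ 2)) := by ring
    _ ≤ A * s ^ 2 / M ^ 2 * (F / r) := by gcongr
    _ = A * F * s ^ 2 / (r * M ^ 2) := by field_simp

lemma lt_mul_pow_div_of_div_lt {A Λ M s : ℝ} (hM : M ≠ 0) (hs : 0 < s)
    (h : 2 * Λ * M ^ 4 / s ^ 4 < A) : Λ < A * s ^ 4 / (2 * M ^ 4) := by
  rw [div_lt_iff₀ (by positivity)] at h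
  rw [lt_div_iff₀ (by positivity)]
  linarith

theorem stmt_13_general (σ C₀ : ℝ) (f : ℝ → ℝ)
    (hf : ∀ θ : ℝ, f θ = σ * Real.exp (C₀ * |π / 2 - θ|)) :
    (∀ θ : ℝ, θ ≠ π / 2 →
      deriv (deriv f) θ + f θ = (C₀ ^ 2 + 1) * f θ) ∧
    ∀ Λ M θ₀ : ℝ, 0 < Λ → 0 < M → 0 < θ₀ → θ₀ < π / 2 →
      (C₀ ^ 2 + 1 > 2 * Λ * M ^ 4 / Real.sin θ₀ ^ 4) →
      ∀ r θ : ℝ, 0 < r → θ ∈ Set.Icc θ₀ (π - θ₀) → θ ≠ π / 2 →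
        Real.sin θ ^ 2 / (2 * M ^ 2) ≤ f θ / r →
        (C₀ ^ 2 + 1) * Real.sin θ₀ ^ 4 / (2 * M ^ 4) ≤
            (deriv (deriv f) θ + f θ) * Real.sin θ ^ 2 / (r * M ^ 2) ∧
          Λ < (C₀ ^ 2 + 1) * Real.sin θ₀ ^ 4 / (2 * M ^ 4) := by
  have hode : ∀ θ, θ ≠ π / 2 → deriv (deriv f) θ + f θ = (C₀ ^ 2 + 1) * f θ := fun θ hθ => by
    rw [deriv_deriv_const_mul_exp_abs hf hθ]
    ring
  refine ⟨hode, fun Λ M θ₀ _ hM hθ₀ hθ₀' hC r θ hr hθ hθne hF => ⟨?_, ?_⟩⟩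
  · rw [hode θ hθne]
    exact le_mul_sq_div_of_sq_div_le (by positivity) hr
      (sin_nonneg_of_nonneg_of_le_pi hθ₀.le (by linarith))
      (sin_le_sin_of_mem_Icc_pi_sub (by linarith) hθ) hF
  · exact lt_mul_pow_div_of_div_lt hM.ne' (sin_pos_of_pos_of_lt_pi hθ₀ (by linarith [pi_pos])) hC

/-- For `f(θ) = σ e^{C₀|π/2 − θ|}` one has `f'' + f = (C₀² + 1) f` away from
`θ = π/2`; consequently, if `C₀² + 1 > 2ΛM⁴/sin⁴θ₀`, then at any point `(r, θ)` of the
sector with `f(θ)/r ≥ sin²θ/(2M²)` the barrier `v = r f(θ) + x₂²/(2M²)` satisfies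
`det D²v = (f''+f) sin²θ/(rM²) ≥ (C₀²+1) sin⁴θ₀/(2M⁴) > Λ`. -/
theorem stmt_13 (σ C₀ : ℝ) (hσ : 0 < σ) (hC₀ : 0 < C₀) (f : ℝ → ℝ)
    (hf : ∀ θ : ℝ, f θ = σ * Real.exp (C₀ * |π / 2 - θ|)) :
    (∀ θ : ℝ, θ ≠ π / 2 →
      deriv (deriv f) θ + f θ = (C₀ ^ 2 + 1) * f θ) ∧
    ∀ Λ M θ₀ : ℝ, 0 < Λ → 0 < M → 0 < θ₀ → θ₀ < π / 2 →
      (C₀ ^ 2 + 1 > 2 * Λ * M ^ 4 / Real.sin θ₀ ^ 4) →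
      ∀ r θ : ℝ, 0 < r → θ ∈ Set.Icc θ₀ (π - θ₀) → θ ≠ π / 2 →
        Real.sin θ ^ 2 / (2 * M ^ 2) ≤ f θ / r →
        (C₀ ^ 2 + 1) * Real.sin θ₀ ^ 4 / (2 * M ^ 4) ≤
            (deriv (deriv f) θ + f θ) * Real.sin θ ^ 2 / (r * M ^ 2) ∧
          Λ < (C₀ ^ 2 + 1) * Real.sin θ₀ ^ 4 / (2 * M ^ 4) :=
  stmt_13_general σ C₀ f hf
end

section
/- In dimension n = 2, for δ, Λ, N > 0 the function w(x₁, x₂) = δ(|x₁| + x₁²/2) + (Λ/δ)x₂² − N x₂ is convex on ℝ², and its Monge–Ampère measure satisfies M w(E) ≥ 2Λ |E| for every Borel set E ⊂ ℝ²; in particular det D²w = 2Λ > Λ at every point with x₁ ≠ 0. -/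
open Set MeasureTheory
open scoped RealInnerProductSpace

open scoped Topology

theorem convexOn_of_subgradientAt_nonempty {n : ℕ} {u : EuclideanSpace ℝ (Fin n) → ℝ}
    {s : Set (EuclideanSpace ℝ (Fin n))} (hs : Convex ℝ s)
    (hu : ∀ x ∈ s, (subgradientAt n u s x).Nonempty) : ConvexOn ℝ s u := by
  refine ⟨hs, fun x hx y hy a b ha hb hab => ?_⟩
  set z := a • x + b • y
  obtain ⟨p, hp⟩ := hu z (hs hx hy ha hb hab)
  have hxz := hp x hx
  have hyz := hp y hy
  have hsum : a • (x - z) + b • (y - z) = 0 := by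
    rw [smul_sub, smul_sub, ← add_sub_add_comm, ← add_smul, hab, one_smul, sub_self]
  have hinner : a * ⟪p, x - z⟫ + b * ⟪p, y - z⟫ = 0 := by
    simpa only [inner_add_right, inner_smul_right, inner_zero_right] using congrArg (⟪p, ·⟫) hsum
  calc u z = (a + b) * u z + (a * ⟪p, x - z⟫ + b * ⟪p, y - z⟫) := by rw [hab, hinner]; ring
    _ = a * (u z + ⟪p, x - z⟫) + b * (u z + ⟪p, y - z⟫) := by ring
    _ ≤ a • u x + b • u y :=
      add_le_add (mul_le_mul_of_nonneg_left hxz ha) (mul_le_mul_of_nonneg_left hyz hb)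

theorem volume_setOf_apply_eq_zero {ι : Type*} [Fintype ι] (i : ι) :
    volume {x : EuclideanSpace ℝ ι | x i = 0} = 0 := by
  classical
  exact Measure.addHaar_submodule _
    (EuclideanSpace.proj i : EuclideanSpace ℝ ι →L[ℝ] ℝ).toLinearMap.ker
    fun h => by simpa using Submodule.eq_top_iff'.1 h (EuclideanSpace.single i 1)

theorem addHaar_image_eq_of_hasFDerivWithinAt_const {E : Type*} [NormedAddCommGroup E]
    [NormedSpace ℝ E] [FiniteDimensional ℝ E] [MeasurableSpace E] [BorelSpace E]
    (μ : Measure E) [μ.IsAddHaarMeasure] {f : E → E} {A : E →L[ℝ] E} {s : Set E}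
    (hs : MeasurableSet s) (hf : ∀ x ∈ s, HasFDerivWithinAt f A s x) (hinj : InjOn f s) :
    μ (f '' s) = ENNReal.ofReal |A.det| * μ s := by
  rw [← lintegral_abs_det_fderiv_eq_addHaar_image μ hs hf hinj, setLIntegral_const]

theorem strictMono_sign_add_self : StrictMono fun t : ℝ => (SignType.sign t : ℝ) + t := by
  intro a b hab
  rcases lt_trichotomy a 0 with ha | rfl | ha <;> rcases lt_trichotomy b 0 with hb | rfl | hb <;>
    simp [*] <;> linarith

theorem sign_mul_le_abs (t x : ℝ) : (SignType.sign t : ℝ) * x ≤ |x| := by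
  rcases lt_trichotomy t 0 with ht | ht | ht <;> simp [ht, neg_le_abs, le_abs_self]

local notation "ℝ²" => EuclideanSpace ℝ (Fin 2)

section Barrier

variable {δ Λ N : ℝ}

noncomputable def barrier (δ Λ N : ℝ) (x : ℝ²) : ℝ :=
  δ * (|x 0| + x 0 ^ 2 / 2) + Λ / δ * x 1 ^ 2 - N * x 1

/-- On the line `x 0 = 0`, where `barrier` is not differentiable, `sign 0 = 0` selects the
subgradient `(0, 2Λ/δ * x 1 - N)`. -/
noncomputable def barrierGrad (δ Λ N : ℝ) (x : ℝ²) : ℝ² :=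
  !₂[δ * (SignType.sign (x 0) + x 0), 2 * Λ / δ * x 1 - N]

noncomputable def barrierHessian (δ Λ : ℝ) : ℝ² →L[ℝ] ℝ² :=
  Matrix.toEuclideanCLM (𝕜 := ℝ) (Matrix.diagonal ![δ, 2 * Λ / δ])

theorem barrierHessian_apply (v : ℝ²) : barrierHessian δ Λ v = !₂[δ * v 0, 2 * Λ / δ * v 1] := by
  ext i
  fin_cases i <;> simp [barrierHessian, Matrix.mulVec_diagonal]

theorem barrier_sub_sub_inner_barrierGrad (y z : ℝ²) :
    barrier δ Λ N z - barrier δ Λ N y - ⟪barrierGrad δ Λ N y, z - y⟫ =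
      δ * (|z 0| - SignType.sign (y 0) * z 0) + δ / 2 * (z 0 - y 0) ^ 2
        + Λ / δ * (z 1 - y 1) ^ 2 := by
  have hy : |y 0| = SignType.sign (y 0) * y 0 := (sign_mul_self _).symm
  simp only [barrier, barrierGrad, PiLp.inner_apply, PiLp.sub_apply, RCLike.inner_apply,
    Real.ringHom_apply, Fin.sum_univ_two, Matrix.cons_val_zero, Matrix.cons_val_one, hy]
  ring

theorem barrierGrad_mem_subgradientAt (hδ : 0 ≤ δ) (hΛ : 0 ≤ Λ) (x : ℝ²) :
    barrierGrad δ Λ N x ∈ subgradientAt 2 (barrier δ Λ N) univ x := by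
  intro y _
  have htaylor := barrier_sub_sub_inner_barrierGrad (δ := δ) (Λ := Λ) (N := N) x y
  have h0 : 0 ≤ δ * (|y 0| - SignType.sign (x 0) * y 0) :=
    mul_nonneg hδ (sub_nonneg.2 (sign_mul_le_abs _ _))
  have h1 : 0 ≤ δ / 2 * (y 0 - x 0) ^ 2 := by positivity
  have h2 : 0 ≤ Λ / δ * (y 1 - x 1) ^ 2 := by positivity
  linarith

theorem convexOn_barrier (hδ : 0 ≤ δ) (hΛ : 0 ≤ Λ) : ConvexOn ℝ univ (barrier δ Λ N) :=
  convexOn_of_subgradientAt_nonempty convex_univ fun x _ =>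
    ⟨_, barrierGrad_mem_subgradientAt hδ hΛ x⟩

theorem hasFDerivAt_barrier {y : ℝ²} (hy : y 0 ≠ 0) :
    HasFDerivAt (barrier δ Λ N) (innerSL ℝ (barrierGrad δ Λ N y)) y := by
  have h0 : HasDerivAt (fun t : ℝ => δ * (|t| + t ^ 2 / 2))
      (δ * (SignType.sign (y 0) + y 0)) (y 0) := by
    simpa using ((hasDerivAt_abs hy).add ((hasDerivAt_pow 2 (y 0)).div_const 2)).const_mul δ
  have h1 : HasDerivAt (fun t : ℝ => Λ / δ * t ^ 2 - N * t) (2 * Λ / δ * y 1 - N) (y 1) := by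
    refine (((hasDerivAt_pow 2 (y 1)).const_mul (Λ / δ)).sub
      ((hasDerivAt_id' (y 1)).const_mul N)).congr_deriv ?_
    norm_num
    ring
  have h0' := h0.comp_hasFDerivAt y (EuclideanSpace.proj (0 : Fin 2) : ℝ² →L[ℝ] ℝ).hasFDerivAt
  have h1' := h1.comp_hasFDerivAt y (EuclideanSpace.proj (1 : Fin 2) : ℝ² →L[ℝ] ℝ).hasFDerivAt
  have hsplit : barrier δ Λ N = (fun t : ℝ => δ * (|t| + t ^ 2 / 2)) ∘ (fun x : ℝ² => x 0)
      + (fun t : ℝ => Λ / δ * t ^ 2 - N * t) ∘ (fun x : ℝ² => x 1) := by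
    ext x; simp only [barrier, Pi.add_apply, Function.comp_apply]; ring
  rw [hsplit]
  refine (h0'.add h1').congr_fderiv ?_
  ext v
  simp only [add_apply, smul_apply, PiLp.proj_apply, smul_eq_mul, barrierGrad, coe_innerSL_apply,
    PiLp.inner_apply, RCLike.inner_apply, Real.ringHom_apply, Fin.sum_univ_two, Matrix.cons_val_zero,
    Matrix.cons_val_one]
  ring

theorem barrierGrad_eventuallyEq {x : ℝ²} (hx : x 0 ≠ 0) :
    barrierGrad δ Λ N =ᶠ[𝓝 x]
      fun y => barrierHessian δ Λ y + !₂[δ * SignType.sign (x 0), -N] := by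
  have hsign : ∀ᶠ y in 𝓝 x, SignType.sign (y 0) = SignType.sign (x 0) :=
    ((continuousAt_sign_of_ne_zero hx).comp (f := fun y : ℝ² => y 0) (x := x)
      (by fun_prop : Continuous fun y : ℝ² => y 0).continuousAt).eventually_mem
      (mem_nhds_discrete.2 (mem_singleton _))
  filter_upwards [hsign] with y hy
  ext i
  fin_cases i <;> simp [barrierGrad, barrierHessian_apply, hy] <;> ring

theorem hasFDerivAt_barrierGrad {x : ℝ²} (hx : x 0 ≠ 0) :
    HasFDerivAt (barrierGrad δ Λ N) (barrierHessian δ Λ) x :=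
  ((barrierHessian δ Λ).hasFDerivAt.add_const _).congr_of_eventuallyEq
    (barrierGrad_eventuallyEq hx)

theorem fderiv_fderiv_barrier {x : ℝ²} (hx : x 0 ≠ 0) :
    fderiv ℝ (fderiv ℝ (barrier δ Λ N)) x = (innerSL ℝ).comp (barrierHessian δ Λ) := by
  have hev : fderiv ℝ (barrier δ Λ N) =ᶠ[𝓝 x] fun y => innerSL ℝ (barrierGrad δ Λ N y) := by
    filter_upwards [(isOpen_ne_fun (EuclideanSpace.proj (0 : Fin 2) : ℝ² →L[ℝ] ℝ).continuous
      continuous_const).mem_nhds hx] with y hy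
    exact (hasFDerivAt_barrier hy).fderiv
  exact (((innerSL ℝ).hasFDerivAt.comp x (hasFDerivAt_barrierGrad hx)).congr_of_eventuallyEq
    hev).fderiv

theorem det_barrierHessian (hδ : δ ≠ 0) : (barrierHessian δ Λ).det = 2 * Λ := by
  rw [ContinuousLinearMap.det, barrierHessian, Matrix.coe_toEuclideanCLM_eq_toEuclideanLin]
  refine (LinearMap.det_toLin (PiLp.basisFun 2 ℝ (Fin 2)) _).trans ?_
  rw [Matrix.det_diagonal, Fin.prod_univ_two]
  exact mul_div_cancel₀ _ hδ

theorem injective_barrierGrad (hδ : δ ≠ 0) (hΛ : Λ ≠ 0) :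
    Function.Injective (barrierGrad δ Λ N) := by
  intro x y h
  have h0 := congrArg (· 0) h
  have h1 := congrArg (· 1) h
  simp [barrierGrad, hδ, hΛ] at h0 h1
  ext i
  fin_cases i
  · exact strictMono_sign_add_self.injective h0
  · exact h1

theorem ofReal_mul_volume_le_volume_biUnion_subgradientAt_barrier (hδ : 0 < δ) (hΛ : 0 < Λ)
    {E : Set ℝ²} (hE : MeasurableSet E) :
    ENNReal.ofReal (2 * Λ) * volume E ≤
      volume (⋃ x ∈ E, subgradientAt 2 (barrier δ Λ N) univ x) := by
  set E' := E \ {x : ℝ² | x 0 = 0}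
  have hE' : MeasurableSet E' :=
    hE.diff (measurableSet_eq_fun (by fun_prop) measurable_const)
  have himage : volume (barrierGrad δ Λ N '' E') = ENNReal.ofReal (2 * Λ) * volume E := by
    rw [addHaar_image_eq_of_hasFDerivWithinAt_const volume hE'
      (fun x hx => (hasFDerivAt_barrierGrad hx.2).hasFDerivWithinAt)
      (injective_barrierGrad hδ.ne' hΛ.ne').injOn, det_barrierHessian hδ.ne',
      abs_of_pos (by positivity), measure_sdiff_null (volume_setOf_apply_eq_zero 0)]
  rw [← himage]
  refine measure_mono ?_
  rintro _ ⟨x, hx, rfl⟩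
  exact mem_biUnion hx.1 (barrierGrad_mem_subgradientAt hδ.le hΛ.le x)

theorem det_hessian_barrier (hδ : δ ≠ 0) {x : ℝ²} (hx : x 0 ≠ 0) :
    Matrix.det (Matrix.of fun i j : Fin 2 =>
      iteratedFDeriv ℝ 2 (barrier δ Λ N) x
        ![EuclideanSpace.single i (1 : ℝ), EuclideanSpace.single j (1 : ℝ)]) = 2 * Λ := by
  simp only [iteratedFDeriv_two_apply, fderiv_fderiv_barrier hx]
  rw [Matrix.det_fin_two]
  simp [barrierHessian_apply, EuclideanSpace.inner_single_right, mul_div_cancel₀ _ hδ]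

end Barrier

theorem stmt_17_general (δ Λ N : ℝ) (hδ : 0 < δ) (hΛ : 0 < Λ)
    (w : EuclideanSpace ℝ (Fin 2) → ℝ)
    (hw : ∀ x : EuclideanSpace ℝ (Fin 2),
      w x = δ * (|x 0| + (x 0) ^ 2 / 2) + (Λ / δ) * (x 1) ^ 2 - N * x 1) :
    ConvexOn ℝ Set.univ w ∧
    (∀ E : Set (EuclideanSpace ℝ (Fin 2)), MeasurableSet E →
      ENNReal.ofReal (2 * Λ) * volume E ≤
        volume (⋃ x ∈ E, subgradientAt 2 w Set.univ x)) ∧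
    (∀ x : EuclideanSpace ℝ (Fin 2), x 0 ≠ 0 →
      Matrix.det (Matrix.of fun i j : Fin 2 =>
        iteratedFDeriv ℝ 2 w x
          ![EuclideanSpace.single i (1 : ℝ), EuclideanSpace.single j (1 : ℝ)]) = 2 * Λ ∧
      Λ < 2 * Λ) := by
  obtain rfl : w = barrier δ Λ N := funext hw
  exact ⟨convexOn_barrier hδ.le hΛ.le,
    fun E hE => ofReal_mul_volume_le_volume_biUnion_subgradientAt_barrier hδ hΛ hE,
    fun x hx => ⟨det_hessian_barrier hδ.ne' hx, by linarith⟩⟩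

/-- In the plane, `w(x) = δ(|x₁| + x₁²/2) + (Λ/δ)x₂² − Nx₂` is convex, its
Monge–Ampère measure satisfies `Mw(E) ≥ 2Λ|E|` for Borel `E`, and `det D²w = 2Λ > Λ` at
every point with `x₁ ≠ 0`. -/
theorem stmt_17 (δ Λ N : ℝ) (hδ : 0 < δ) (hΛ : 0 < Λ) (hN : 0 < N)
    (w : EuclideanSpace ℝ (Fin 2) → ℝ)
    (hw : ∀ x : EuclideanSpace ℝ (Fin 2),
      w x = δ * (|x 0| + (x 0) ^ 2 / 2) + (Λ / δ) * (x 1) ^ 2 - N * x 1) :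
    ConvexOn ℝ Set.univ w ∧
    (∀ E : Set (EuclideanSpace ℝ (Fin 2)), MeasurableSet E →
      ENNReal.ofReal (2 * Λ) * volume E ≤
        volume (⋃ x ∈ E, subgradientAt 2 w Set.univ x)) ∧
    (∀ x : EuclideanSpace ℝ (Fin 2), x 0 ≠ 0 →
      Matrix.det (Matrix.of fun i j : Fin 2 =>
        iteratedFDeriv ℝ 2 w x
          ![EuclideanSpace.single i (1 : ℝ), EuclideanSpace.single j (1 : ℝ)]) = 2 * Λ ∧
      Λ < 2 * Λ) :=
  stmt_17_general δ Λ N hδ hΛ w hw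
end
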